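/- Gurvits' one-variable inequality: Suppose p is a-hyperbolic of degree m ≥ 2 with Gårding cone Γ, and let b ∈ Γ. Then ((m−1)^{m−1}/mᵐ) · inf_{t>0} p(a + t·b)/t ≤ (1/m)·p′_b(a), where p′_b(a) = (d/ds) p(a + s·b)|_{s=0}. Equality holds if and only if all the a-eigenvalues of b are equal. -/

import Mathlib

open MvPolynomial

/-- `lam : Fin m → ℝ` is a tuple of `a`-eigenvalues of `x` for the polynomial `p`:
`p(t·a + x) = p(a)·∏ₖ (t + lamₖ)` for all real `t`. -/
def IsEigen {n : ℕ} (m : ℕ) (p : MvPolynomial (Fin n) ℝ) (a x : Fin n → ℝ)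
    (lam : Fin m → ℝ) : Prop :=
  ∀ t : ℝ, eval (t • a + x) p = eval a p * ∏ k, (t + lam k)

/-- `p` is `a`-hyperbolic (of degree `m`): `p(a) > 0` and every `x` has `m` real
`a`-eigenvalues. -/
def IsHyperbolic {n : ℕ} (m : ℕ) (p : MvPolynomial (Fin n) ℝ) (a : Fin n → ℝ) : Prop :=
  0 < eval a p ∧ ∀ x : Fin n → ℝ, ∃ lam : Fin m → ℝ, IsEigen m p a x lam

/-- The open Gårding cone: the set of `x` all of whose `a`-eigenvalues are positive. -/
def GardingCone {n : ℕ} (m : ℕ) (p : MvPolynomial (Fin n) ℝ) (a : Fin n → ℝ) :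
    Set (Fin n → ℝ) :=
  {x | ∃ lam : Fin m → ℝ, IsEigen m p a x lam ∧ ∀ k, 0 < lam k}

-- The ordered (non-decreasing) arrangement `λ↑` of the `a`-eigenvalues of `x`
-- (defined via choice; for a hyperbolic `p` the monotone arrangement exists and is unique).
open scoped Classical in
noncomputable def ordEig {n : ℕ} (m : ℕ) (p : MvPolynomial (Fin n) ℝ) (a x : Fin n → ℝ) :
    Fin m → ℝ :=
  if h : ∃ lam : Fin m → ℝ, Monotone lam ∧ IsEigen m p a x lam then h.choose
  else fun _ => 0

/-- The directional derivative `p'_b(a) = (d/ds) p(a + s·b) |_{s=0}`. -/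
noncomputable def dirDeriv {n : ℕ} (p : MvPolynomial (Fin n) ℝ) (a b : Fin n → ℝ) : ℝ :=
  deriv (fun s : ℝ => eval (a + s • b) p) 0

/-!
If `λ₁, …, λₘ > 0` are the `a`-eigenvalues of `b`, homogeneity turns the eigenvalue identity
into `p(a + t b) = p(a) ∏ₖ (1 + t λₖ)`, so `p′_b(a) = p(a) ∑ₖ λₖ`. By AM-GM,
`∏ₖ (1 + t λₖ) ≤ (1 + t μ)ᵐ` with `μ` the mean eigenvalue, strictly unless all `λₖ` coincide,
and `(1 + u)ᵐ / u` attains its minimum `mᵐ / (m - 1)^(m-1)` at `u = 1 / (m - 1)`. Evaluating at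
`t = 1 / ((m - 1) μ)` gives the inequality (strict if the `λₖ` differ), and when all `λₖ` are
equal the infimum is exactly this minimum.
-/

open Finset Set

lemma MvPolynomial.IsHomogeneous.eval_smul {σ R : Type*} [CommSemiring R] {p : MvPolynomial σ R}
    {m : ℕ} (hp : p.IsHomogeneous m) (c : R) (x : σ → R) : eval (c • x) p = c ^ m * eval x p := by
  simp only [eval_eq, mul_sum]
  refine sum_congr rfl fun d hd => ?_
  simp only [Pi.smul_apply, smul_eq_mul, mul_pow, prod_mul_distrib, prod_pow_eq_pow_sum,
    ← hp.degree_eq_sum_deg_support hd]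
  ring

namespace IsEigen

variable {n m : ℕ} {p : MvPolynomial (Fin n) ℝ} {a x : Fin n → ℝ} {lam : Fin m → ℝ}

lemma eval_add_smul (hp : p.IsHomogeneous m) (h : IsEigen m p a x lam) (s : ℝ) :
    eval (a + s • x) p = eval a p * ∏ k, (1 + s * lam k) := by
  rcases eq_or_ne s 0 with rfl | hs
  · simp
  have hsx : a + s • x = s • (s⁻¹ • a + x) := by
    rw [smul_add, smul_smul, mul_inv_cancel₀ hs, one_smul]
  rw [hsx, hp.eval_smul, h, mul_left_comm, ← Fin.prod_const m s, ← prod_mul_distrib]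
  congr 2 with k
  field_simp

lemma dirDeriv_eq (hp : p.IsHomogeneous m) (h : IsEigen m p a x lam) :
    dirDeriv p a x = eval a p * ∑ k, lam k := by
  have hderiv := (HasDerivAt.fun_finsetProd (u := Finset.univ) fun k _ =>
    ((hasDerivAt_id (0 : ℝ)).mul_const (lam k)).const_add 1).const_mul (eval a p)
  simp only [id, zero_mul, add_zero, prod_const_one, one_smul, one_mul] at hderiv
  unfold dirDeriv
  simp only [h.eval_add_smul hp]
  exact hderiv.deriv

lemma exists_eq (hpa : eval a p ≠ 0) (h : IsEigen m p a x lam) {lam' : Fin m → ℝ}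
    (h' : IsEigen m p a x lam') (i : Fin m) : ∃ j, lam i = lam' j := by
  have hprod : ∏ j, (-lam i + lam' j) = 0 := by
    have := (h (-lam i)).symm.trans (h' (-lam i))
    rw [prod_eq_zero (mem_univ i) (neg_add_cancel _), mul_zero] at this
    exact (mul_eq_zero.mp this.symm).resolve_left hpa
  obtain ⟨j, -, hj⟩ := prod_eq_zero_iff.mp hprod
  exact ⟨j, by linarith⟩

end IsEigen

namespace Real

variable {ι : Type*} [Fintype ι] {z : ι → ℝ}

lemma prod_eq_geom_mean_pow [Nonempty ι] (hz : ∀ i, 0 ≤ z i) :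
    ∏ i, z i = (∏ i, z i ^ (1 / Fintype.card ι : ℝ)) ^ Fintype.card ι := by
  rw [← Finset.prod_pow]
  refine prod_congr rfl fun i _ => ?_
  rw [← rpow_natCast, ← rpow_mul (hz i), one_div_mul_cancel (by positivity), rpow_one]

lemma prod_le_mean_pow (hz : ∀ i, 0 ≤ z i) :
    ∏ i, z i ≤ ((∑ i, z i) / Fintype.card ι) ^ Fintype.card ι := by
  cases isEmpty_or_nonempty ι
  · simp
  have hAM := geom_mean_le_arith_mean_weighted Finset.univ (fun _ => 1 / Fintype.card ι) z
    (fun _ _ => by positivity) (by simp) fun i _ => hz i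
  rw [← mul_sum, one_div_mul_eq_div] at hAM
  rw [prod_eq_geom_mean_pow hz]
  gcongr
  exact prod_nonneg fun i _ => rpow_nonneg (hz i) _

lemma prod_lt_mean_pow (hz : ∀ i, 0 ≤ z i) {j k : ι} (hjk : z j ≠ z k) :
    ∏ i, z i < ((∑ i, z i) / Fintype.card ι) ^ Fintype.card ι := by
  have : Nonempty ι := ⟨j⟩
  have hAM := (geom_mean_lt_arith_mean_weighted_iff_of_pos Finset.univ
    (fun _ => 1 / Fintype.card ι) z (fun _ _ => by positivity) (by simp) fun i _ => hz i).2
    ⟨j, mem_univ j, k, mem_univ k, hjk⟩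
  rw [← mul_sum, one_div_mul_eq_div] at hAM
  rw [prod_eq_geom_mean_pow hz]
  gcongr
  exact prod_nonneg fun i _ => rpow_nonneg (hz i) _

end Real

section OneVariable

variable {m : ℕ} {t : ℝ} {lam : Fin m → ℝ}

lemma sum_one_add_mul_div (hm : m ≠ 0) :
    (∑ k, (1 + t * lam k)) / m = 1 + t * ((∑ k, lam k) / m) := by
  rw [sum_add_distrib, ← mul_sum, sum_const, card_univ, Fintype.card_fin, nsmul_eq_mul, mul_one]
  field_simp

lemma prod_one_add_mul_le_pow (h : ∀ k, 0 ≤ 1 + t * lam k) :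
    ∏ k, (1 + t * lam k) ≤ (1 + t * ((∑ k, lam k) / m)) ^ m := by
  rcases eq_or_ne m 0 with rfl | hm
  · simp
  simpa [sum_one_add_mul_div hm] using Real.prod_le_mean_pow h

lemma prod_one_add_mul_lt_pow (h : ∀ k, 0 ≤ 1 + t * lam k) (ht : t ≠ 0) {j k : Fin m}
    (hjk : lam j ≠ lam k) : ∏ k, (1 + t * lam k) < (1 + t * ((∑ k, lam k) / m)) ^ m := by
  have hm : m ≠ 0 := j.pos.ne'
  have hz : 1 + t * lam j ≠ 1 + t * lam k := by simpa [ht] using hjk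
  simpa [sum_one_add_mul_div hm] using Real.prod_lt_mean_pow h hz

lemma isLeast_one_add_pow_div (hm : 2 ≤ m) :
    IsLeast ((fun u : ℝ => (1 + u) ^ m / u) '' Ioi 0) ((m : ℝ) ^ m / ((m : ℝ) - 1) ^ (m - 1)) := by
  have hr : (0 : ℝ) < (m : ℝ) - 1 := sub_pos.2 (Nat.one_lt_cast.2 hm)
  have hpow : ((m : ℝ) - 1) ^ m = ((m : ℝ) - 1) ^ (m - 1) * ((m : ℝ) - 1) :=
    (pow_sub_one_mul (by omega) _).symm
  refine ⟨⟨1 / ((m : ℝ) - 1), by simpa using hr, ?_⟩, ?_⟩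
  · have h1 : 1 + 1 / ((m : ℝ) - 1) = m / ((m : ℝ) - 1) := by field_simp; ring
    dsimp only
    rw [h1, div_pow, hpow]
    field_simp
  · rintro _ ⟨u, hu : 0 < u, rfl⟩
    -- Bernoulli's inequality at `y`, chosen so that `1 + m y = (m - 1) u`.
    set y : ℝ := (((m : ℝ) - 1) * u - 1) / m with hy
    have hbern := one_add_mul_le_pow (a := y) (by rw [hy, le_div_iff₀ (by linarith)]; nlinarith) m
    have h1 : 1 + (m : ℝ) * y = ((m : ℝ) - 1) * u := by rw [hy]; field_simp; ring
    have h2 : 1 + y = ((m : ℝ) - 1) * (1 + u) / m := by rw [hy]; field_simp; ring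
    rw [h1, h2, div_pow, mul_pow, hpow, le_div_iff₀ (by positivity)] at hbern
    rw [div_le_div_iff₀ (by positivity) hu]
    nlinarith

lemma isLeast_mul_one_add_mul_pow_div (hm : 2 ≤ m) {c μ : ℝ} (hc : 0 ≤ c) (hμ : 0 < μ) :
    IsLeast ((fun t : ℝ => c * (1 + t * μ) ^ m / t) '' Ioi 0)
      (c * μ * ((m : ℝ) ^ m / ((m : ℝ) - 1) ^ (m - 1))) := by
  obtain ⟨⟨u₀, hu₀ : 0 < u₀, hmin⟩, hK⟩ := isLeast_one_add_pow_div hm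
  have hscale : ∀ t > 0, c * (1 + t * μ) ^ m / t = c * μ * ((1 + t * μ) ^ m / (t * μ)) :=
    fun t ht => by field_simp
  refine ⟨⟨u₀ / μ, div_pos hu₀ hμ, ?_⟩, ?_⟩
  · dsimp only at hmin ⊢
    rw [hscale _ (div_pos hu₀ hμ), div_mul_cancel₀ u₀ hμ.ne', hmin]
  · rintro _ ⟨t, ht : 0 < t, rfl⟩
    dsimp only
    rw [hscale t ht]
    exact mul_le_mul_of_nonneg_left (hK ⟨t * μ, mul_pos ht hμ, rfl⟩) (by positivity)

end OneVariable

lemma gurvits_inequality_prod {m : ℕ} (hm : 2 ≤ m) {c : ℝ} (hc : 0 < c) {lam : Fin m → ℝ}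
    (hlam : ∀ k, 0 < lam k) :
    ((m - 1 : ℝ) ^ (m - 1) / (m : ℝ) ^ m) *
        sInf ((fun t : ℝ => c * (∏ k, (1 + t * lam k)) / t) '' Ioi 0) ≤
      (1 / m : ℝ) * (c * ∑ k, lam k) ∧
    (((m - 1 : ℝ) ^ (m - 1) / (m : ℝ) ^ m) *
        sInf ((fun t : ℝ => c * (∏ k, (1 + t * lam k)) / t) '' Ioi 0) =
      (1 / m : ℝ) * (c * ∑ k, lam k) ↔ ∀ j k, lam j = lam k) := by
  have hm1 : (0 : ℝ) < m - 1 := sub_pos.2 (Nat.one_lt_cast.2 hm)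
  set μ : ℝ := (∑ k, lam k) / m with hμ_def
  have hμ : 0 < μ :=
    div_pos (sum_pos (fun k _ => hlam k) ⟨⟨0, by omega⟩, mem_univ _⟩) (by positivity)
  set C : ℝ := (m - 1 : ℝ) ^ (m - 1) / (m : ℝ) ^ m
  have hC : 0 < C := by positivity
  set K : ℝ := (m : ℝ) ^ m / ((m : ℝ) - 1) ^ (m - 1)
  set f : ℝ → ℝ := fun t => c * (∏ k, (1 + t * lam k)) / t
  set g : ℝ → ℝ := fun t => c * (1 + t * μ) ^ m / t
  have hz : ∀ t > 0, ∀ k, 0 < 1 + t * lam k := fun t ht k => by have := hlam k; positivity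
  have hfg : ∀ t > 0, f t ≤ g t := fun t ht => by
    simp only [f, g]
    gcongr
    exact prod_one_add_mul_le_pow fun k => (hz t ht k).le
  have hg_min : IsLeast (g '' Ioi 0) (c * μ * K) := isLeast_mul_one_add_mul_pow_div hm hc.le hμ
  obtain ⟨t₀, ht₀ : 0 < t₀, hgt₀ : g t₀ = c * μ * K⟩ := hg_min.1
  have hbdd : BddBelow (f '' Ioi 0) := ⟨0, by
    rintro _ ⟨t, ht : 0 < t, rfl⟩
    have := Finset.prod_pos fun k (_ : k ∈ Finset.univ) => hz t ht k
    positivity⟩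
  have hinf : sInf (f '' Ioi 0) ≤ f t₀ := csInf_le hbdd ⟨_, ht₀, rfl⟩
  have hrhs : (1 / m : ℝ) * (c * ∑ k, lam k) = C * (c * μ * K) := by
    simp only [C, K, hμ_def]
    field_simp
  rw [hrhs]
  refine ⟨mul_le_mul_of_nonneg_left (hinf.trans (hgt₀ ▸ hfg t₀ ht₀)) hC.le, fun heq => ?_,
    fun hall => ?_⟩
  · by_contra! ⟨j, k, hjk⟩
    have hlt : f t₀ < g t₀ := by
      simp only [f, g]
      gcongr
      exact prod_one_add_mul_lt_pow (fun k => (hz t₀ ht₀ k).le) ht₀.ne' hjk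
    exact (mul_lt_mul_of_pos_left (hinf.trans_lt (hgt₀ ▸ hlt)) hC).ne heq
  · have hlam_eq : ∀ k, lam k = μ := fun k => by
      simp only [hμ_def, sum_congr rfl fun j _ => hall j k, sum_const, card_univ,
        Fintype.card_fin, nsmul_eq_mul]
      field_simp
    have hfg_eq : f = g := by
      ext t
      simp only [f, g, hlam_eq, Fin.prod_const]
    rw [hfg_eq, hg_min.csInf_eq]

/-- Gurvits' one-variable inequality: for `b ∈ Γ` and `m ≥ 2`,
`((m−1)^{m−1}/mᵐ)·inf_{t>0} p(a + t·b)/t ≤ (1/m)·p′_b(a)`, with equality iff all the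
`a`-eigenvalues of `b` are equal. -/
theorem gurvits_one_variable_inequality
    {n m : ℕ} (hm : 2 ≤ m) (p : MvPolynomial (Fin n) ℝ) (hp : p.IsHomogeneous m)
    (a : Fin n → ℝ) (hhyp : IsHyperbolic m p a)
    (b : Fin n → ℝ) (hb : b ∈ GardingCone m p a) :
    ((m - 1 : ℝ) ^ (m - 1) / (m : ℝ) ^ m) *
        sInf ((fun t : ℝ => eval (a + t • b) p / t) '' Set.Ioi (0 : ℝ)) ≤
      (1 / m : ℝ) * dirDeriv p a b ∧
    (((m - 1 : ℝ) ^ (m - 1) / (m : ℝ) ^ m) *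
        sInf ((fun t : ℝ => eval (a + t • b) p / t) '' Set.Ioi (0 : ℝ)) =
      (1 / m : ℝ) * dirDeriv p a b ↔
      ∀ lam : Fin m → ℝ, IsEigen m p a b lam → ∀ j k : Fin m, lam j = lam k) := by
  obtain ⟨lam, heig, hpos⟩ := hb
  have hpa : 0 < eval a p := hhyp.1
  simp only [heig.eval_add_smul hp, heig.dirDeriv_eq hp]
  refine (gurvits_inequality_prod hm hpa hpos).imp_right fun h => h.trans
    ⟨fun hall lam' heig' j k => ?_, fun hall => hall lam heig⟩
  obtain ⟨j', hj⟩ := heig'.exists_eq hpa.ne' heig j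
  obtain ⟨k', hk⟩ := heig'.exists_eq hpa.ne' heig k
  rw [hj, hk, hall j' k']
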